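/- arXiv:0907.2214 — 9 statements merged into one kernel-verified Lean document; each statement's English description precedes it below -/
import Mathlib

section
/- Let B ∈ ℝ^{n×n}, y ∈ ℝ^n, and s ∈ ℝ^n with s ≠ 0. Define B̄ = B + (y − Bs)sᵀ/(sᵀs). Then B̄ s = y, and for every matrix A ∈ ℝ^{n×n} satisfying A s = y one has ‖B̄ − B‖_F ≤ ‖A − B‖_F; that is, B̄ minimizes ‖A − B‖_F over the affine set {A ∈ ℝ^{n×n} : A s = y}. -/
open Matrix

/-- The Frobenius norm of a real matrix. -/
noncomputable def frobNorm {m n : ℕ} (M : Matrix (Fin m) (Fin n) ℝ) : ℝ :=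
  Real.sqrt (∑ i, ∑ j, (M i j) ^ 2)

/-- The rank-one update `B̄ = B + (y − Bs)sᵀ/(sᵀs)` satisfies the secant equation
`B̄ s = y` and minimizes `‖A − B‖_F` over `{A : A s = y}`. -/
theorem rankOneUpdate_secant_and_optimal {n : ℕ}
    (B : Matrix (Fin n) (Fin n) ℝ) (y s : Fin n → ℝ) (hs : s ≠ 0)
    (Bbar : Matrix (Fin n) (Fin n) ℝ)
    (hBbar : Bbar = B + (s ⬝ᵥ s)⁻¹ • vecMulVec (y - B *ᵥ s) s) :
    Bbar *ᵥ s = y ∧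
      ∀ A : Matrix (Fin n) (Fin n) ℝ, A *ᵥ s = y →
        frobNorm (Bbar - B) ≤ frobNorm (A - B) := by
  have hc0 : (0:ℝ) ≤ s ⬝ᵥ s := by
    simp only [dotProduct]
    exact Finset.sum_nonneg fun i _ => mul_self_nonneg _
  have hcne : s ⬝ᵥ s ≠ 0 := fun h => hs (dotProduct_self_eq_zero.mp h)
  have hc : 0 < s ⬝ᵥ s := hc0.lt_of_ne' hcne
  have hvmv : ∀ i j, (vecMulVec (y - B *ᵥ s) s) i j = (y i - (B *ᵥ s) i) * s j := by
    intro i j; simp [vecMulVec_apply]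
  have hsec : Bbar *ᵥ s = y := by
    subst hBbar
    funext i
    simp only [add_mulVec, Pi.add_apply, smul_mulVec, Pi.smul_apply, smul_eq_mul]
    have h1 : (vecMulVec (y - B *ᵥ s) s *ᵥ s) i = (y i - (B *ᵥ s) i) * (s ⬝ᵥ s) := by
      simp only [mulVec, dotProduct, vecMulVec_apply, Pi.sub_apply]
      rw [Finset.mul_sum]
      exact Finset.sum_congr rfl fun j _ => by ring
    rw [h1]
    field_simp
    ring
  refine ⟨hsec, fun A hA => ?_⟩
  unfold frobNorm
  apply Real.sqrt_le_sqrt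
  apply Finset.sum_le_sum
  intro i _
  have hcsum : ∑ j, (s j)^2 = s ⬝ᵥ s := by
    simp only [dotProduct]; exact Finset.sum_congr rfl fun j _ => (sq (s j)).symm ▸ (sq (s j))
  have hd : y i - (B *ᵥ s) i = ∑ j, (A - B) i j * s j := by
    rw [← hA]
    simp only [mulVec, dotProduct, Matrix.sub_apply, sub_mul]
    rw [Finset.sum_sub_distrib]
  have hcs : (∑ j, (A - B) i j * s j)^2 ≤ (∑ j, ((A - B) i j)^2) * (s ⬝ᵥ s) := by
    have h := Finset.sum_mul_sq_le_sq_mul_sq Finset.univ (fun j => (A - B) i j) s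
    rwa [hcsum] at h
  calc ∑ j, ((Bbar - B) i j)^2
      = ∑ j, ((s ⬝ᵥ s)⁻¹ * ((y i - (B *ᵥ s) i) * s j))^2 := by
        subst hBbar
        exact Finset.sum_congr rfl fun j _ => by
          simp [Matrix.sub_apply, Matrix.add_apply, vecMulVec_apply]
    _ = (s ⬝ᵥ s)⁻¹^2 * (y i - (B *ᵥ s) i)^2 * ∑ j, (s j)^2 := by
        rw [Finset.mul_sum]
        exact Finset.sum_congr rfl fun j _ => by ring
    _ = (s ⬝ᵥ s)⁻¹ * (∑ j, (A - B) i j * s j)^2 := by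
        rw [hcsum, hd]; field_simp
    _ ≤ (s ⬝ᵥ s)⁻¹ * ((∑ j, ((A - B) i j)^2) * (s ⬝ᵥ s)) := by
        exact mul_le_mul_of_nonneg_left hcs (by positivity)
    _ = ∑ j, ((A - B) i j)^2 := by field_simp
end

section
/- Let B ∈ ℝ^{n×n}, y ∈ ℝ^n, and s ∈ ℝ^n with s ≠ 0, and define B̄ = B + (y − Bs)sᵀ/(sᵀs). If A ∈ ℝ^{n×n} satisfies A s = y and ‖A − B‖_F = ‖B̄ − B‖_F, then A = B̄; that is, B̄ is the unique minimizer of ‖A − B‖_F over {A ∈ ℝ^{n×n} : A s = y}. -/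
open Matrix

/-- `B̄ = B + (y − Bs)sᵀ/(sᵀs)` is the *unique* minimizer of `‖A − B‖_F` over
`{A : A s = y}`: any `A` with `A s = y` attaining the minimal value equals `B̄`. -/
theorem rankOneUpdate_unique_minimizer {n : ℕ}
    (B : Matrix (Fin n) (Fin n) ℝ) (y s : Fin n → ℝ) (hs : s ≠ 0)
    (Bbar : Matrix (Fin n) (Fin n) ℝ)
    (hBbar : Bbar = B + (s ⬝ᵥ s)⁻¹ • vecMulVec (y - B *ᵥ s) s)
    (A : Matrix (Fin n) (Fin n) ℝ) (hA : A *ᵥ s = y)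
    (hmin : frobNorm (A - B) = frobNorm (Bbar - B)) :
    A = Bbar := by
  have hss : (0:ℝ) < s ⬝ᵥ s := by
    have h1 : s ⬝ᵥ s = ∑ j, s j ^ 2 := by simp [dotProduct, sq]
    rw [h1]
    obtain ⟨j, hj⟩ : ∃ j, s j ≠ 0 := by
      by_contra h; push_neg at h; exact hs (funext h)
    have hpos : (0:ℝ) < s j ^ 2 := by positivity
    exact lt_of_lt_of_le hpos
      (Finset.single_le_sum (f := fun j => s j ^ 2) (fun i _ => sq_nonneg _) (Finset.mem_univ j))
  set c : ℝ := (s ⬝ᵥ s)⁻¹ with hc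
  have hcs : c * (s ⬝ᵥ s) = 1 := inv_mul_cancel₀ (ne_of_gt hss)
  set E := A - B with hE
  have hEij : ∀ i j, E i j = A i j - B i j := fun i j => rfl
  have hEs : ∀ i, ∑ j, E i j * s j = (y - B *ᵥ s) i := by
    intro i
    have : (E *ᵥ s) i = (y - B *ᵥ s) i := by
      rw [hE, Matrix.sub_mulVec, hA]
    simpa [mulVec, dotProduct] using this
  have hF : ∀ i j, (Bbar - B) i j = c * (y - B *ᵥ s) i * s j := by
    intro i j
    simp [hBbar, vecMulVec, mul_assoc]
  -- equality of sums of squares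
  have hsum : ∑ i, ∑ j, (E i j)^2 = ∑ i, ∑ j, ((Bbar - B) i j)^2 := by
    have h1 : (0:ℝ) ≤ ∑ i, ∑ j, (E i j)^2 := by positivity
    have h2 : (0:ℝ) ≤ ∑ i, ∑ j, ((Bbar - B) i j)^2 := by positivity
    have := hmin
    unfold frobNorm at this
    exact (Real.sqrt_inj h1 h2).mp this
  -- row-wise Pythagoras
  have hrow : ∀ i, ∑ j, (E i j - (Bbar - B) i j)^2
      = ∑ j, (E i j)^2 - ∑ j, ((Bbar - B) i j)^2 := by
    intro i
    set t : ℝ := (y - B *ᵥ s) i with ht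
    have hts : ∑ j, E i j * s j = t := hEs i
    have hss' : ∑ j, (s j)^2 = s ⬝ᵥ s := by simp [dotProduct, sq]
    have e1 : ∑ j, (E i j - (Bbar - B) i j)^2
        = ∑ j, (E i j)^2 - 2*c*t*(∑ j, E i j * s j) + c^2*t^2*(∑ j, (s j)^2) := by
      rw [Finset.mul_sum, Finset.mul_sum, ← Finset.sum_sub_distrib, ← Finset.sum_add_distrib]
      apply Finset.sum_congr rfl
      intro j _
      rw [hF i j]
      ring
    have e2 : ∑ j, ((Bbar - B) i j)^2 = c^2*t^2*(∑ j, (s j)^2) := by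
      rw [Finset.mul_sum]
      apply Finset.sum_congr rfl
      intro j _
      rw [hF i j]; ring
    rw [e1, e2, hts, hss']
    have : c^2*t^2*(s ⬝ᵥ s) = c * t^2 := by
      have : c^2*t^2*(s ⬝ᵥ s) = (c * (s ⬝ᵥ s)) * (c * t^2) := by ring
      rw [this, hcs, one_mul]
    rw [this]
    ring
  have hzero : ∑ i, ∑ j, (E i j - (Bbar - B) i j)^2 = 0 := by
    have : ∑ i, ∑ j, (E i j - (Bbar - B) i j)^2
        = ∑ i, (∑ j, (E i j)^2 - ∑ j, ((Bbar - B) i j)^2) :=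
      Finset.sum_congr rfl (fun i _ => hrow i)
    rw [this, Finset.sum_sub_distrib, hsum, sub_self]
  have hEF : ∀ i j, E i j = (Bbar - B) i j := by
    intro i j
    have hinner : ∀ i ∈ Finset.univ, (0:ℝ) ≤ ∑ j, (E i j - (Bbar - B) i j)^2 :=
      fun i _ => Finset.sum_nonneg (fun j _ => sq_nonneg _)
    have h1 := (Finset.sum_eq_zero_iff_of_nonneg hinner).mp hzero i (Finset.mem_univ i)
    have h2 := (Finset.sum_eq_zero_iff_of_nonneg
      (fun j _ => sq_nonneg (E i j - (Bbar - B) i j))).mp h1 j (Finset.mem_univ j)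
    have := pow_eq_zero_iff (n := 2) (by norm_num) |>.mp h2
    linarith [this]
  ext i j
  have h := hEF i j
  rw [hEij i j] at h
  have : (Bbar - B) i j = Bbar i j - B i j := rfl
  rw [this] at h
  linarith
end

section
/- Let y ∈ ℝ^n and s ∈ ℝ^n with s ≠ 0. The set Q(y,s) = {A ∈ ℝ^{n×n} : A s = y} contains a symmetric positive definite matrix if and only if there exist a nonzero vector v ∈ ℝ^n and an invertible matrix L ∈ ℝ^{n×n} such that y = L v and v = Lᵀ s. -/
open Matrix

/-- The set `Q(y,s) = {A : A s = y}` (with `s ≠ 0`) contains a symmetric positive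
definite matrix iff `y = L v` and `v = Lᵀ s` for some nonzero vector `v` and
invertible matrix `L`. -/
theorem exists_spd_in_Qys_iff {n : ℕ} (y s : Fin n → ℝ) (hs : s ≠ 0) :
    (∃ A : Matrix (Fin n) (Fin n) ℝ,
        Aᵀ = A ∧ (∀ x : Fin n → ℝ, x ≠ 0 → 0 < x ⬝ᵥ (A *ᵥ x)) ∧ A *ᵥ s = y) ↔
      (∃ (v : Fin n → ℝ) (L : Matrix (Fin n) (Fin n) ℝ),
        v ≠ 0 ∧ IsUnit L ∧ y = L *ᵥ v ∧ v = Lᵀ *ᵥ s) := by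
  constructor
  · rintro ⟨A, hsym, hpos, hAs⟩
    have hPD : A.PosDef := by
      refine Matrix.PosDef.of_dotProduct_mulVec_pos ?_ (fun x hx => ?_)
      · simpa [Matrix.IsHermitian, Matrix.conjTranspose_eq_transpose_of_trivial] using hsym
      · simpa using hpos x hx
    have hPSD := hPD.posSemidef
    obtain ⟨B, hBB, hBH⟩ : ∃ B : Matrix (Fin n) (Fin n) ℝ, B * B = A ∧ B.IsHermitian := by
      open scoped MatrixOrder in
      exact ⟨CFC.sqrt A, CFC.sqrt_mul_sqrt_self A hPSD.nonneg, (CFC.sqrt_nonneg A).posSemidef.1⟩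
    have hBT : Bᵀ = B := by
      have := hBH
      simpa [Matrix.IsHermitian, Matrix.conjTranspose_eq_transpose_of_trivial] using this
    have hdet : B.det ≠ 0 := by
      intro h
      have : A.det = B.det * B.det := by rw [← hBB, Matrix.det_mul]
      rw [h, mul_zero] at this
      exact (hPD.det_pos.ne') this
    have hUnit : IsUnit B := by
      rw [Matrix.isUnit_iff_isUnit_det]
      exact isUnit_iff_ne_zero.mpr hdet
    refine ⟨B *ᵥ s, B, ?_, hUnit, ?_, by rw [hBT]⟩
    · intro h
      exact hs (Matrix.mulVec_injective_iff_isUnit.mpr hUnit (by simpa using h))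
    · rw [Matrix.mulVec_mulVec, hBB, hAs]
  · rintro ⟨v, L, hv, hL, hy, hvL⟩
    refine ⟨L * Lᵀ, by simp [Matrix.transpose_mul], fun x hx => ?_, ?_⟩
    · have hLTx : Lᵀ *ᵥ x ≠ 0 := by
        intro h
        have hLT : IsUnit Lᵀ := by
          rwa [Matrix.isUnit_iff_isUnit_det, Matrix.det_transpose,
            ← Matrix.isUnit_iff_isUnit_det]
        exact hx (Matrix.mulVec_injective_iff_isUnit.mpr hLT (by simpa using h))
      have : x ⬝ᵥ ((L * Lᵀ) *ᵥ x) = (Lᵀ *ᵥ x) ⬝ᵥ (Lᵀ *ᵥ x) := by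
        rw [← Matrix.mulVec_mulVec, Matrix.dotProduct_mulVec, ← Matrix.mulVec_transpose]
      rw [this]
      have := dotProduct_self_eq_zero (v := Lᵀ *ᵥ x)
      have hnn : 0 ≤ (Lᵀ *ᵥ x) ⬝ᵥ (Lᵀ *ᵥ x) :=
        Finset.sum_nonneg fun i _ => mul_self_nonneg _
      rcases hnn.lt_or_eq with h | h
      · exact h
      · exact absurd (dotProduct_self_eq_zero.mp h.symm) hLTx
    · rw [← Matrix.mulVec_mulVec, ← hvL, ← hy]
end

section
/- Let y ∈ ℝ^n and s ∈ ℝ^n with s ≠ 0. There exists a symmetric positive definite matrix H₊ ∈ ℝ^{n×n} with H₊ s = y if and only if yᵀ s > 0. -/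
open Matrix

private lemma dp_self_nonneg {n : ℕ} (v : Fin n → ℝ) : 0 ≤ v ⬝ᵥ v :=
  Finset.sum_nonneg fun _ _ => mul_self_nonneg _

private lemma dp_self_pos {n : ℕ} {v : Fin n → ℝ} (hv : v ≠ 0) : 0 < v ⬝ᵥ v := by
  rcases lt_or_eq_of_le (dp_self_nonneg v) with h | h
  · exact h
  · exact absurd (dotProduct_self_eq_zero.mp h.symm) hv

private lemma vmv_mulVec {n : ℕ} (u v x : Fin n → ℝ) :
    vecMulVec u v *ᵥ x = (v ⬝ᵥ x) • u := by
  funext i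
  simp only [mulVec, vecMulVec_apply, dotProduct, Pi.smul_apply, smul_eq_mul,
    Finset.sum_mul]
  exact Finset.sum_congr rfl fun j _ => by ring

private lemma vmv_transpose {n : ℕ} (u v : Fin n → ℝ) :
    (vecMulVec u v)ᵀ = vecMulVec v u := by
  ext i j
  simp [vecMulVec_apply, transpose_apply, mul_comm]

/-- There is a symmetric positive definite matrix `H₊` with `H₊ s = y` iff `yᵀ s > 0`. -/
theorem exists_spd_secant_iff_dot_pos {n : ℕ} (y s : Fin n → ℝ) (hs : s ≠ 0) :
    (∃ Hp : Matrix (Fin n) (Fin n) ℝ,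
        Hpᵀ = Hp ∧ (∀ x : Fin n → ℝ, x ≠ 0 → 0 < x ⬝ᵥ (Hp *ᵥ x)) ∧ Hp *ᵥ s = y) ↔
      0 < y ⬝ᵥ s := by
  have ha : 0 < s ⬝ᵥ s := dp_self_pos hs
  constructor
  · rintro ⟨Hp, hsym, hpd, hsec⟩
    have := hpd s hs
    rwa [hsec, dotProduct_comm] at this
  · intro hys
    set c := y ⬝ᵥ s with hc
    set a := s ⬝ᵥ s with hadef
    have hcne : c ≠ 0 := ne_of_gt hys
    have hane : a ≠ 0 := ne_of_gt ha
    refine ⟨c⁻¹ • vecMulVec y y + (1 - a⁻¹ • vecMulVec s s), ?_, ?_, ?_⟩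
    · simp [transpose_add, transpose_sub, transpose_smul, vmv_transpose]
    · intro x hx
      have key : x ⬝ᵥ ((c⁻¹ • vecMulVec y y + (1 - a⁻¹ • vecMulVec s s)) *ᵥ x)
          = c⁻¹ * (y ⬝ᵥ x)^2 + (x ⬝ᵥ x - a⁻¹ * (s ⬝ᵥ x)^2) := by
        simp [add_mulVec, sub_mulVec, smul_mulVec, vmv_mulVec, dotProduct_add,
          dotProduct_sub, dotProduct_smul, one_mulVec, dotProduct_comm x y, dotProduct_comm x s]
        ring
      rw [key]
      by_cases hmul : ∃ r : ℝ, x = r • s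
      · obtain ⟨r, rfl⟩ := hmul
        have hr : r ≠ 0 := by rintro rfl; simp at hx
        have h0 : (r • s) ⬝ᵥ (r • s) = r^2 * a := by
          simp [smul_dotProduct, dotProduct_smul, ← hadef]; ring
        have h1 : y ⬝ᵥ (r • s) = r * c := by simp [dotProduct_smul, ← hc, mul_comm]
        have h2 : s ⬝ᵥ (r • s) = r * a := by simp [dotProduct_smul, ← hadef]
        rw [h0, h1, h2]
        have h3 : c⁻¹ * (r * c)^2 + (r^2 * a - a⁻¹ * (r * a)^2) = r^2 * c := by
          field_simp; ring
        rw [h3]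
        positivity
      · have ht : x - (a⁻¹ * (s ⬝ᵥ x)) • s ≠ 0 := fun h =>
          hmul ⟨a⁻¹ * (s ⬝ᵥ x), sub_eq_zero.mp h⟩
        have hexp : (x - (a⁻¹ * (s ⬝ᵥ x)) • s) ⬝ᵥ (x - (a⁻¹ * (s ⬝ᵥ x)) • s)
            = x ⬝ᵥ x - a⁻¹ * (s ⬝ᵥ x)^2 := by
          simp only [sub_dotProduct, dotProduct_sub, smul_dotProduct, dotProduct_smul,
            dotProduct_comm x s, ← hadef, smul_eq_mul]
          field_simp
          ring
        have hcs : 0 < x ⬝ᵥ x - a⁻¹ * (s ⬝ᵥ x)^2 := hexp ▸ dp_self_pos ht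
        have h1 : 0 ≤ c⁻¹ * (y ⬝ᵥ x)^2 := by positivity
        linarith
    · rw [add_mulVec, sub_mulVec, smul_mulVec, smul_mulVec, vmv_mulVec, vmv_mulVec,
        one_mulVec, ← hc, ← hadef]
      funext i
      simp [smul_smul, inv_mul_cancel₀ hcne, inv_mul_cancel₀ hane]
end

section
/- With the Grassmann geodesic data as in the context, the parallel transport matrix satisfies T(t)ᵀ T(t) = I_n − U S(t) Vᵀ Xᵀ − X V S(t) Uᵀ for every t ∈ ℝ. -/
open Matrix

/-- `C(t) = diag(cos(σᵢ t))`. -/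
noncomputable def cosDiag {r : ℕ} (σ : Fin r → ℝ) (t : ℝ) : Matrix (Fin r) (Fin r) ℝ :=
  Matrix.diagonal fun i => Real.cos (σ i * t)

/-- `S(t) = diag(sin(σᵢ t))`. -/
noncomputable def sinDiag {r : ℕ} (σ : Fin r → ℝ) (t : ℝ) : Matrix (Fin r) (Fin r) ℝ :=
  Matrix.diagonal fun i => Real.sin (σ i * t)

/-- The Grassmann parallel transport matrix
`T(t) = −X V S(t) Uᵀ + U C(t) Uᵀ + (I − U Uᵀ)`. -/
noncomputable def transportMat {n r : ℕ} (X U : Matrix (Fin n) (Fin r) ℝ)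
    (V : Matrix (Fin r) (Fin r) ℝ) (σ : Fin r → ℝ) (t : ℝ) : Matrix (Fin n) (Fin n) ℝ :=
  -(X * V * sinDiag σ t * Uᵀ) + U * cosDiag σ t * Uᵀ + (1 - U * Uᵀ)

/-- `T(t)ᵀ T(t) = I − U S(t) Vᵀ Xᵀ − X V S(t) Uᵀ`. -/
theorem transport_transpose_mul {n r : ℕ} (hr : 1 ≤ r) (hrn : r ≤ n)
    (X U : Matrix (Fin n) (Fin r) ℝ) (V : Matrix (Fin r) (Fin r) ℝ) (σ : Fin r → ℝ)
    (hX : Xᵀ * X = 1) (hU : Uᵀ * U = 1) (hXU : Xᵀ * U = 0) (hV : Vᵀ * V = 1) (t : ℝ) :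
    (transportMat X U V σ t)ᵀ * transportMat X U V σ t =
      1 - U * sinDiag σ t * Vᵀ * Xᵀ - X * V * sinDiag σ t * Uᵀ := by
  have hUX : Uᵀ * X = 0 := by
    have := congrArg Matrix.transpose hXU
    simpa using this
  have hVV : V * Vᵀ = 1 := mul_eq_one_comm.mp hV
  have h1 : ∀ M : Matrix (Fin r) (Fin n) ℝ, Uᵀ * (U * M) = M := fun M => by
    rw [← Matrix.mul_assoc, hU, Matrix.one_mul]
  have h2 : ∀ M : Matrix (Fin r) (Fin n) ℝ, Uᵀ * (X * M) = 0 := fun M => by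
    rw [← Matrix.mul_assoc, hUX, Matrix.zero_mul]
  have h3 : ∀ M : Matrix (Fin r) (Fin n) ℝ, Xᵀ * (U * M) = 0 := fun M => by
    rw [← Matrix.mul_assoc, hXU, Matrix.zero_mul]
  have h4 : ∀ M : Matrix (Fin r) (Fin n) ℝ, Xᵀ * (X * M) = M := fun M => by
    rw [← Matrix.mul_assoc, hX, Matrix.one_mul]
  have h5 : ∀ M : Matrix (Fin r) (Fin n) ℝ, Vᵀ * (V * M) = M := fun M => by
    rw [← Matrix.mul_assoc, hV, Matrix.one_mul]
  have h6 : ∀ M : Matrix (Fin r) (Fin n) ℝ, V * (Vᵀ * M) = M := fun M => by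
    rw [← Matrix.mul_assoc, hVV, Matrix.one_mul]
  have hsT : (sinDiag σ t)ᵀ = sinDiag σ t := Matrix.diagonal_transpose _
  have hcT : (cosDiag σ t)ᵀ = cosDiag σ t := Matrix.diagonal_transpose _
  have hCS : cosDiag σ t * cosDiag σ t + sinDiag σ t * sinDiag σ t = 1 := by
    ext i j
    rcases eq_or_ne i j with rfl | h
    · have := Real.cos_sq_add_sin_sq (σ i * t)
      simp only [cosDiag, sinDiag, Matrix.diagonal_mul_diagonal, Matrix.add_apply,
        Matrix.diagonal_apply_eq, Matrix.one_apply_eq]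
      nlinarith [this]
    · simp [cosDiag, sinDiag, Matrix.diagonal_mul_diagonal, Matrix.diagonal_apply_ne _ h,
        Matrix.one_apply_ne h]
  simp only [transportMat, transpose_add, transpose_sub, transpose_neg, transpose_mul,
    transpose_one, hsT, hcT, Matrix.mul_add, Matrix.add_mul, Matrix.mul_sub, Matrix.sub_mul,
    Matrix.mul_one, Matrix.one_mul, Matrix.transpose_transpose, Matrix.neg_mul, Matrix.mul_neg, Matrix.mul_assoc,
    h1, h2, h3, h4, h5, h6, Matrix.mul_zero, Matrix.zero_mul]
  have key : U * (sinDiag σ t * (sinDiag σ t * Uᵀ)) =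
      U * Uᵀ - U * (cosDiag σ t * (cosDiag σ t * Uᵀ)) := by
    rw [eq_sub_iff_add_eq, ← Matrix.mul_add, ← Matrix.mul_assoc, ← Matrix.mul_assoc,
      ← Matrix.add_mul, add_comm, hCS, Matrix.one_mul]
  rw [key]
  abel
end

section
/- With the Grassmann geodesic data as in the context, let Δ₁, Δ₂ ∈ ℝ^{n×r} be tangent vectors at X, i.e. Xᵀ Δ₁ = 0 and Xᵀ Δ₂ = 0. Then the canonical inner product is preserved under parallel transport: trace((T(t)Δ₁)ᵀ (T(t)Δ₂)) = trace(Δ₁ᵀ Δ₂) for every t ∈ ℝ. -/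
open Matrix

/-- Parallel transport preserves the canonical inner product
`⟨Δ₁, Δ₂⟩ = trace(Δ₁ᵀ Δ₂)` of tangent vectors at `X`. -/
theorem transport_preserves_inner {n r : ℕ} (hr : 1 ≤ r) (hrn : r ≤ n)
    (X U : Matrix (Fin n) (Fin r) ℝ) (V : Matrix (Fin r) (Fin r) ℝ) (σ : Fin r → ℝ)
    (hX : Xᵀ * X = 1) (hU : Uᵀ * U = 1) (hXU : Xᵀ * U = 0) (hV : Vᵀ * V = 1)
    (Δ₁ Δ₂ : Matrix (Fin n) (Fin r) ℝ) (hΔ₁ : Xᵀ * Δ₁ = 0) (hΔ₂ : Xᵀ * Δ₂ = 0) (t : ℝ) :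
    ((transportMat X U V σ t * Δ₁)ᵀ * (transportMat X U V σ t * Δ₂)).trace =
      (Δ₁ᵀ * Δ₂).trace := by
  have hUX : Uᵀ * X = 0 := by
    have := congrArg Matrix.transpose hXU; simpa using this
  have hΔ₁X : Δ₁ᵀ * X = 0 := by
    have := congrArg Matrix.transpose hΔ₁; simpa using this
  have hXX : ∀ M : Matrix (Fin r) (Fin r) ℝ, Xᵀ * (X * M) = M := fun M => by
    rw [← Matrix.mul_assoc, hX, one_mul]
  have hUU : ∀ M : Matrix (Fin r) (Fin r) ℝ, Uᵀ * (U * M) = M := fun M => by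
    rw [← Matrix.mul_assoc, hU, one_mul]
  have hVV : ∀ M : Matrix (Fin r) (Fin r) ℝ, Vᵀ * (V * M) = M := fun M => by
    rw [← Matrix.mul_assoc, hV, one_mul]
  have hXU0 : ∀ M : Matrix (Fin r) (Fin r) ℝ, Xᵀ * (U * M) = 0 := fun M => by
    rw [← Matrix.mul_assoc, hXU, Matrix.zero_mul]
  have hUX0 : ∀ M : Matrix (Fin r) (Fin r) ℝ, Uᵀ * (X * M) = 0 := fun M => by
    rw [← Matrix.mul_assoc, hUX, Matrix.zero_mul]
  have hΔ₁X0 : ∀ M : Matrix (Fin r) (Fin r) ℝ, Δ₁ᵀ * (X * M) = 0 := fun M => by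
    rw [← Matrix.mul_assoc, hΔ₁X, Matrix.zero_mul]
  have hSt : (sinDiag σ t)ᵀ = sinDiag σ t := Matrix.diagonal_transpose _
  have hCt : (cosDiag σ t)ᵀ = cosDiag σ t := Matrix.diagonal_transpose _
  have hS2 : ∀ M : Matrix (Fin r) (Fin r) ℝ,
      sinDiag σ t * (sinDiag σ t * M) = M - cosDiag σ t * (cosDiag σ t * M) := fun M => by
    rw [← Matrix.mul_assoc, ← Matrix.mul_assoc, sinDiag, cosDiag,
      Matrix.diagonal_mul_diagonal, Matrix.diagonal_mul_diagonal]
    have : (Matrix.diagonal fun i => Real.sin (σ i * t) * Real.sin (σ i * t)) =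
        1 - Matrix.diagonal fun i => Real.cos (σ i * t) * Real.cos (σ i * t) := by
      ext i j
      by_cases h : i = j <;>
        simp [h, Matrix.diagonal_apply, Matrix.one_apply] <;>
        nlinarith [Real.sin_sq_add_cos_sq (σ j * t)]
    rw [this, Matrix.sub_mul, Matrix.one_mul]
  congr 1
  simp only [transportMat, Matrix.transpose_add, Matrix.transpose_neg, Matrix.transpose_mul,
    Matrix.transpose_sub, Matrix.transpose_one, Matrix.transpose_transpose, hSt, hCt,
    Matrix.add_mul, Matrix.mul_add, Matrix.sub_mul, Matrix.mul_sub, Matrix.neg_mul,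
    Matrix.mul_neg, Matrix.one_mul, Matrix.mul_one, Matrix.mul_assoc,
    hXX, hUU, hVV, hXU0, hUX0, hΔ₁X0, hΔ₂, hΔ₁X,
    Matrix.mul_zero, Matrix.zero_mul, neg_zero, add_zero, zero_add, sub_zero, zero_sub, neg_neg,
    hS2]
  abel
end

section
/- With the Grassmann geodesic data as in the context, and assuming moreover V Vᵀ = I_r, the geodesic point remains on the Stiefel manifold: X(t)ᵀ X(t) = I_r for every t ∈ ℝ. -/
open Matrix

/-- The geodesic point `X(t) = X V C(t) Vᵀ + U S(t) Vᵀ`. -/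
noncomputable def geoPoint {n r : ℕ} (X U : Matrix (Fin n) (Fin r) ℝ)
    (V : Matrix (Fin r) (Fin r) ℝ) (σ : Fin r → ℝ) (t : ℝ) : Matrix (Fin n) (Fin r) ℝ :=
  X * V * cosDiag σ t * Vᵀ + U * sinDiag σ t * Vᵀ

lemma cos_sq_add_sin_sq {r : ℕ} (σ : Fin r → ℝ) (t : ℝ) :
    cosDiag σ t * cosDiag σ t + sinDiag σ t * sinDiag σ t = 1 := by
  ext i j
  rcases eq_or_ne i j with h | h
  · subst h
    simp [cosDiag, sinDiag, Matrix.one_apply]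
    nlinarith [Real.sin_sq_add_cos_sq (σ i * t)]
  · simp [cosDiag, sinDiag, Matrix.one_apply, h]

/-- The geodesic stays on the Stiefel manifold: `X(t)ᵀ X(t) = I`. -/
theorem geodesic_stays_orthonormal {n r : ℕ} (hr : 1 ≤ r) (hrn : r ≤ n)
    (X U : Matrix (Fin n) (Fin r) ℝ) (V : Matrix (Fin r) (Fin r) ℝ) (σ : Fin r → ℝ)
    (hX : Xᵀ * X = 1) (hU : Uᵀ * U = 1) (hXU : Xᵀ * U = 0) (hV : Vᵀ * V = 1)
    (hVVt : V * Vᵀ = 1) (t : ℝ) :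
    (geoPoint X U V σ t)ᵀ * geoPoint X U V σ t = 1 := by
  have hUX : Uᵀ * X = 0 := by
    have := congrArg Matrix.transpose hXU
    simpa using this
  have hCt : (cosDiag σ t)ᵀ = cosDiag σ t := Matrix.diagonal_transpose _
  have hSt : (sinDiag σ t)ᵀ = sinDiag σ t := Matrix.diagonal_transpose _
  simp only [geoPoint, Matrix.transpose_add, Matrix.transpose_mul, Matrix.transpose_transpose,
    hCt, hSt, Matrix.add_mul, Matrix.mul_add]
  simp only [Matrix.mul_assoc]
  have e1 : V * (cosDiag σ t * (Vᵀ * (Xᵀ * (X * (V * (cosDiag σ t * Vᵀ))))))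
      = V * (cosDiag σ t * (cosDiag σ t * Vᵀ)) := by
    rw [show Xᵀ * (X * (V * (cosDiag σ t * Vᵀ))) = (Xᵀ * X) * (V * (cosDiag σ t * Vᵀ)) by
      simp only [Matrix.mul_assoc], hX, Matrix.one_mul,
      show Vᵀ * (V * (cosDiag σ t * Vᵀ)) = (Vᵀ * V) * (cosDiag σ t * Vᵀ) by
      simp only [Matrix.mul_assoc], hV, Matrix.one_mul]
  have e2 : V * (cosDiag σ t * (Vᵀ * (Xᵀ * (U * (sinDiag σ t * Vᵀ))))) = 0 := by
    rw [show Xᵀ * (U * (sinDiag σ t * Vᵀ)) = (Xᵀ * U) * (sinDiag σ t * Vᵀ) by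
      simp only [Matrix.mul_assoc], hXU]
    simp
  have e3 : V * (sinDiag σ t * (Uᵀ * (X * (V * (cosDiag σ t * Vᵀ))))) = 0 := by
    rw [show Uᵀ * (X * (V * (cosDiag σ t * Vᵀ))) = (Uᵀ * X) * (V * (cosDiag σ t * Vᵀ)) by
      simp only [Matrix.mul_assoc], hUX]
    simp
  have e4 : V * (sinDiag σ t * (Uᵀ * (U * (sinDiag σ t * Vᵀ))))
      = V * (sinDiag σ t * (sinDiag σ t * Vᵀ)) := by
    rw [show Uᵀ * (U * (sinDiag σ t * Vᵀ)) = (Uᵀ * U) * (sinDiag σ t * Vᵀ) by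
      simp only [Matrix.mul_assoc], hU, Matrix.one_mul]
  rw [e1, e2, e3, e4, add_zero, zero_add]
  calc V * (cosDiag σ t * (cosDiag σ t * Vᵀ)) + V * (sinDiag σ t * (sinDiag σ t * Vᵀ))
      = V * ((cosDiag σ t * cosDiag σ t + sinDiag σ t * sinDiag σ t) * Vᵀ) := by
        simp only [Matrix.add_mul, Matrix.mul_add, Matrix.mul_assoc]
    _ = 1 := by rw [cos_sq_add_sin_sq]; simp [hVVt]
end

section
/- With the Grassmann geodesic data as in the context, let X⊥ ∈ ℝ^{n×(n−r)} satisfy X⊥ᵀ X⊥ = I_{n−r} and Xᵀ X⊥ = 0, and define the parallel transported orthogonal complement X⊥(t) = T(t) X⊥. Then X⊥(t)ᵀ X⊥(t) = I_{n−r} for every t ∈ ℝ. -/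
open Matrix

/-- The parallel transported orthogonal complement `X⊥(t) = T(t) X⊥` has
orthonormal columns: `X⊥(t)ᵀ X⊥(t) = I`. -/
theorem transported_complement_orthonormal {n r : ℕ} (hr : 1 ≤ r) (hrn : r < n)
    (X U : Matrix (Fin n) (Fin r) ℝ) (V : Matrix (Fin r) (Fin r) ℝ) (σ : Fin r → ℝ)
    (hX : Xᵀ * X = 1) (hU : Uᵀ * U = 1) (hXU : Xᵀ * U = 0) (hV : Vᵀ * V = 1)
    (Xp : Matrix (Fin n) (Fin (n - r)) ℝ) (hXp : Xpᵀ * Xp = 1) (hXXp : Xᵀ * Xp = 0)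
    (t : ℝ) :
    (transportMat X U V σ t * Xp)ᵀ * (transportMat X U V σ t * Xp) = 1 := by
  have hUX : Uᵀ * X = 0 := by
    have := congrArg Matrix.transpose hXU
    simpa using this
  have hXpX : Xpᵀ * X = 0 := by
    have := congrArg Matrix.transpose hXXp
    simpa using this
  have hSt : (sinDiag σ t)ᵀ = sinDiag σ t := by simp [sinDiag]
  have hCt : (cosDiag σ t)ᵀ = cosDiag σ t := by simp [cosDiag]
  have hXX' : ∀ B : Matrix (Fin r) (Fin (n - r)) ℝ, Xᵀ * (X * B) = B := fun B => by
    rw [← Matrix.mul_assoc, hX, Matrix.one_mul]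
  have hUU' : ∀ B : Matrix (Fin r) (Fin (n - r)) ℝ, Uᵀ * (U * B) = B := fun B => by
    rw [← Matrix.mul_assoc, hU, Matrix.one_mul]
  have hVV' : ∀ B : Matrix (Fin r) (Fin (n - r)) ℝ, Vᵀ * (V * B) = B := fun B => by
    rw [← Matrix.mul_assoc, hV, Matrix.one_mul]
  have hXU' : ∀ B : Matrix (Fin r) (Fin (n - r)) ℝ, Xᵀ * (U * B) = 0 := fun B => by
    rw [← Matrix.mul_assoc, hXU, Matrix.zero_mul]
  have hUX' : ∀ B : Matrix (Fin r) (Fin (n - r)) ℝ, Uᵀ * (X * B) = 0 := fun B => by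
    rw [← Matrix.mul_assoc, hUX, Matrix.zero_mul]
  have hXpX' : ∀ B : Matrix (Fin r) (Fin (n - r)) ℝ, Xpᵀ * (X * B) = 0 := fun B => by
    rw [← Matrix.mul_assoc, hXpX, Matrix.zero_mul]
  have hS2 : ∀ B : Matrix (Fin r) (Fin (n - r)) ℝ,
      sinDiag σ t * (sinDiag σ t * B) = B - cosDiag σ t * (cosDiag σ t * B) := fun B => by
    rw [← Matrix.mul_assoc, ← Matrix.mul_assoc]
    have : sinDiag σ t * sinDiag σ t = 1 - cosDiag σ t * cosDiag σ t := by
      simp only [sinDiag, cosDiag, Matrix.diagonal_mul_diagonal]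
      rw [eq_sub_iff_add_eq]
      ext i j
      rcases eq_or_ne i j with h | h
      · subst h
        simpa [Matrix.one_apply, pow_two] using Real.sin_sq_add_cos_sq (σ i * t)
      · simp [Matrix.diagonal_apply_ne _ h, Matrix.one_apply_ne h]
    rw [this, Matrix.sub_mul, Matrix.one_mul]
  simp only [transportMat, Matrix.transpose_add, Matrix.transpose_neg, Matrix.transpose_mul,
    Matrix.transpose_sub, Matrix.transpose_one, Matrix.transpose_transpose, hSt, hCt,
    Matrix.add_mul, Matrix.mul_add, Matrix.sub_mul, Matrix.mul_sub, Matrix.neg_mul,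
    Matrix.mul_neg, Matrix.one_mul, Matrix.mul_one, Matrix.mul_assoc,
    hXX', hUU', hVV', hXU', hUX', hXpX', hS2, hXp, hXXp, hUX, hXpX,
    Matrix.mul_zero, Matrix.zero_mul]
  abel
end

section
/- With the Grassmann geodesic data as in the context, assume moreover V Vᵀ = I_r, let X⊥ ∈ ℝ^{n×(n−r)} satisfy X⊥ᵀ X⊥ = I_{n−r} and Xᵀ X⊥ = 0, and define X⊥(t) = T(t) X⊥. Then X⊥(t)ᵀ X(t) = 0 for every t ∈ ℝ; combined with X(t)ᵀX(t) = I_r and X⊥(t)ᵀX⊥(t) = I_{n−r}, this means the matrix [X(t) X⊥(t)] is orthogonal for all t. -/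
open Matrix

/-- The transported complement stays orthogonal to the geodesic point:
`X⊥(t)ᵀ X(t) = 0` where `X⊥(t) = T(t) X⊥`. -/
theorem transported_complement_perp_geodesic {n r : ℕ} (hr : 1 ≤ r) (hrn : r < n)
    (X U : Matrix (Fin n) (Fin r) ℝ) (V : Matrix (Fin r) (Fin r) ℝ) (σ : Fin r → ℝ)
    (hX : Xᵀ * X = 1) (hU : Uᵀ * U = 1) (hXU : Xᵀ * U = 0) (hV : Vᵀ * V = 1)
    (hVVt : V * Vᵀ = 1)
    (Xp : Matrix (Fin n) (Fin (n - r)) ℝ) (hXp : Xpᵀ * Xp = 1) (hXXp : Xᵀ * Xp = 0)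
    (t : ℝ) :
    (transportMat X U V σ t * Xp)ᵀ * geoPoint X U V σ t = 0 := by
  have hUX : Uᵀ * X = 0 := by
    have := congrArg Matrix.transpose hXU
    simpa using this
  have hXpX : Xpᵀ * X = 0 := by
    have := congrArg Matrix.transpose hXXp
    simpa using this
  have hcomm : cosDiag σ t * sinDiag σ t = sinDiag σ t * cosDiag σ t := by
    simp [cosDiag, sinDiag, Matrix.diagonal_mul_diagonal, mul_comm]
  have key : (transportMat X U V σ t)ᵀ * geoPoint X U V σ t
      = X * V * cosDiag σ t * Vᵀ := by
    have hSt : (sinDiag σ t)ᵀ = sinDiag σ t := by simp [sinDiag]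
    have hCt : (cosDiag σ t)ᵀ = cosDiag σ t := by simp [cosDiag]
    simp only [transportMat, geoPoint, Matrix.transpose_add, Matrix.transpose_sub,
      Matrix.transpose_neg, Matrix.transpose_mul, Matrix.transpose_one,
      Matrix.transpose_transpose, hSt, hCt, Matrix.add_mul, Matrix.mul_add,
      Matrix.sub_mul, Matrix.neg_mul, Matrix.one_mul]
    have h1 : ∀ (M : Matrix (Fin r) (Fin r) ℝ), Uᵀ * (X * M) = 0 := by
      intro M; rw [← Matrix.mul_assoc, hUX, Matrix.zero_mul]
    have h2 : ∀ (M : Matrix (Fin r) (Fin r) ℝ), Uᵀ * (U * M) = M := by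
      intro M; rw [← Matrix.mul_assoc, hU, Matrix.one_mul]
    have h3 : ∀ (M : Matrix (Fin r) (Fin r) ℝ), Xᵀ * (X * M) = M := by
      intro M; rw [← Matrix.mul_assoc, hX, Matrix.one_mul]
    have h4 : ∀ (M : Matrix (Fin r) (Fin r) ℝ), Xᵀ * (U * M) = 0 := by
      intro M; rw [← Matrix.mul_assoc, hXU, Matrix.zero_mul]
    have h5 : ∀ (M : Matrix (Fin r) (Fin r) ℝ), Vᵀ * (V * M) = M := by
      intro M; rw [← Matrix.mul_assoc, hV, Matrix.one_mul]
    simp only [Matrix.mul_assoc, h1, h2, h3, h4, h5, Matrix.mul_zero, Matrix.zero_mul,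
      neg_zero, add_zero, zero_add, sub_zero]
    rw [← Matrix.mul_assoc (sinDiag σ t), ← Matrix.mul_assoc (cosDiag σ t), hcomm]
    abel
  rw [Matrix.transpose_mul, Matrix.mul_assoc, key]
  simp only [← Matrix.mul_assoc, hXpX, Matrix.zero_mul]
end
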